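/- arXiv:1811.04800 — 2 statements merged into one kernel-verified Lean document; each statement's English description precedes it below -/
import Mathlib

section
/- Let Π₁ and Π₂ be two epistemic logic programs over a finite atom domain 𝒜 and epistemic-literal domain ℰ. The following statements are equivalent: (1) Π₁ and Π₂ are strongly ELP-CWV-equivalent; (2) Π₁ and Π₂ are strongly ASP-CWV-equivalent; (3) Π₁ and Π₂ are strongly ELP-WV-equivalent; (4) Π₁ and Π₂ are strongly ASP-WV-equivalent; (5) 𝒮ℰ_{Π₁} = 𝒮ℰ_{Π₂}. -/
variable {V : Type}

/-- A (default-negation) literal: an atom or its default negation. -/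
inductive Lit (V : Type) : Type
  | pos (a : V) : Lit V
  | neg (a : V) : Lit V

namespace Lit

/-- `I ⊨ ℓ`. -/
def sat (I : Set V) : Lit V → Prop
  | pos a => a ∈ I
  | neg a => a ∉ I

/-- The complementary literal (so that `I ⊨ ¬ℓ` iff `I ⊨ ℓ.flip`). -/
def flip : Lit V → Lit V
  | pos a => neg a
  | neg a => pos a

/-- The underlying atom of a literal. -/
def atom : Lit V → V
  | pos a => a
  | neg a => a

end Lit

/-- A standard (ASP) rule `head ← pos, {¬ℓ | ℓ ∈ neg}`; the set `neg` collects the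
literals occurring under one extra default negation in the body (so an atom `a ∈ pos`
is a positive body atom, `Lit.pos c ∈ neg` encodes the body element `¬c`, and
`Lit.neg d ∈ neg` encodes the doubly negated body element `¬¬d`). -/
structure Rule (V : Type) : Type where
  head : Set V
  pos : Set V
  neg : Set (Lit V)

namespace Rule

/-- The rule only uses atoms from `A`. -/
def wf (r : Rule V) (A : Set V) : Prop :=
  r.head ⊆ A ∧ r.pos ⊆ A ∧ ∀ ℓ ∈ r.neg, ℓ.atom ∈ A

/-- `I` is a model of the rule. -/
def sat (I : Set V) (r : Rule V) : Prop :=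
  (r.pos ⊆ I ∧ ∀ ℓ ∈ r.neg, ¬ ℓ.sat I) → ∃ a ∈ r.head, a ∈ I

/-- `X` satisfies the GL-reduct of the rule w.r.t. `Y`: if the rule survives the
reduct (no negated body literal is satisfied by `Y`), then `X` satisfies the
remaining rule `head ← pos`. -/
def redSat (Y X : Set V) (r : Rule V) : Prop :=
  (∀ ℓ ∈ r.neg, ¬ ℓ.sat Y) → (r.pos ⊆ X → ∃ a ∈ r.head, a ∈ X)

end Rule

/-- A ground logic program `(𝒜, ℛ)`. -/
structure Program (V : Type) : Type where
  A : Set V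
  R : Set (Rule V)

namespace Program

def wf (P : Program V) : Prop := ∀ r ∈ P.R, r.wf P.A

/-- `I ⊨ P`. -/
def model (P : Program V) (I : Set V) : Prop := ∀ r ∈ P.R, r.sat I

/-- `X ⊨ P^Y` (the GL-reduct). -/
def redModel (P : Program V) (Y X : Set V) : Prop := ∀ r ∈ P.R, r.redSat Y X

/-- `M` is an answer set of `P`. -/
def answerSet (P : Program V) (M : Set V) : Prop :=
  M ⊆ P.A ∧ P.model M ∧ ¬ ∃ M', M' ⊂ M ∧ P.redModel M M'

/-- `AS(P)`, the set of answer sets. -/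
def AS (P : Program V) : Set (Set V) := {M | P.answerSet M}

/-- The set of SE-models `(X,Y)` with `X ⊆ Y ⊆ 𝒜`, `Y ⊨ P` and `X ⊨ P^Y`. -/
def SE (P : Program V) : Set (Set V × Set V) :=
  {p | p.1 ⊆ p.2 ∧ p.2 ⊆ P.A ∧ P.model p.2 ∧ P.redModel p.2 p.1}

/-- Componentwise union of programs. -/
def union (P₁ P₂ : Program V) : Program V := ⟨P₁.A ∪ P₂.A, P₁.R ∪ P₂.R⟩

/-- Strong equivalence of plain logic programs. -/
def strongEq (P₁ P₂ : Program V) : Prop :=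
  ∀ P : Program V, P.wf → (P₁.union P).AS = (P₂.union P).AS

end Program

/-- An ELP rule `head ← opos, ¬oneg, not epos, ¬ not eneg`: epistemic literals `not ℓ`
are identified with the literal `ℓ` they negate; `epos` collects the literals occurring
under plain epistemic negation and `eneg` those occurring under default-negated
epistemic negation. -/
structure ERule (V : Type) : Type where
  head : Set V
  opos : Set V
  oneg : Set (Lit V)
  epos : Set (Lit V)
  eneg : Set (Lit V)

namespace ERule

/-- The rule only uses atoms from `A` and epistemic literals from `E`. -/
def wf (r : ERule V) (A : Set V) (E : Set (Lit V)) : Prop :=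
  r.head ⊆ A ∧ r.opos ⊆ A ∧ (∀ ℓ ∈ r.oneg, ℓ.atom ∈ A) ∧ r.epos ⊆ E ∧ r.eneg ⊆ E

/-- The rule of the epistemic reduct w.r.t. guess `Φ` (meaningful when no `eneg`
literal belongs to `Φ`, in which case: epistemic literals `not ℓ ∈ Φ` become `⊤`,
the remaining `not ℓ` in `epos` become `¬ℓ`, and `¬ not ℓ` in `eneg` becomes `¬¬ℓ`,
i.e. `¬(ℓ.flip)`, reading triple negations as single ones). -/
def reduct (r : ERule V) (Φ : Set (Lit V)) : Rule V :=
  ⟨r.head, r.opos, r.oneg ∪ (r.epos \ Φ) ∪ (Lit.flip '' r.eneg)⟩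

/-- The underlying plain rule of an epistemic-negation-free ELP rule. -/
def toRule (r : ERule V) : Rule V := ⟨r.head, r.opos, r.oneg⟩

end ERule

/-- A plain rule viewed as an ELP rule. -/
def Rule.toERule (r : Rule V) : ERule V := ⟨r.head, r.pos, r.neg, ∅, ∅⟩

/-- An epistemic logic program `(𝒜, ℰ, ℛ)`. -/
structure ELP (V : Type) : Type where
  A : Set V
  E : Set (Lit V)
  R : Set (ERule V)

/-- `I` is `Φ`-compatible w.r.t. `E`. -/
def compatible (E Φ : Set (Lit V)) (I : Set (Set V)) : Prop :=
  I.Nonempty ∧ (∀ ℓ ∈ Φ, ∃ J ∈ I, ¬ ℓ.sat J) ∧ (∀ ℓ ∈ E \ Φ, ∀ J ∈ I, ℓ.sat J)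

/-- `Φ` is realizable in the set `I` of interpretations (w.r.t. `E`). -/
def realizableIn (E Φ : Set (Lit V)) (I : Set (Set V)) : Prop :=
  ∃ I', I' ⊆ I ∧ compatible E Φ I'

/-- A guess `Φ` is consistent w.r.t. `E`: whenever `E` contains both `not a` and
`not ¬a`, `Φ` contains at least one of them. -/
def consistentGuess (E Φ : Set (Lit V)) : Prop :=
  ∀ a : V, Lit.pos a ∈ E → Lit.neg a ∈ E → (Lit.pos a ∈ Φ ∨ Lit.neg a ∈ Φ)

namespace ELP

/-- Well-formedness: `E` consists of epistemic literals over `A`, and every rule is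
over `A` and `E`. -/
def wf (P : ELP V) : Prop :=
  (∀ ℓ ∈ P.E, ℓ.atom ∈ P.A) ∧ ∀ r ∈ P.R, r.wf P.A P.E

/-- An epistemic-negation-free (plain ASP) program viewed as an ELP. -/
def isASP (P : ELP V) : Prop := P.E = ∅ ∧ ∀ r ∈ P.R, r.epos = ∅ ∧ r.eneg = ∅

/-- Componentwise union of ELPs. -/
def union (P₁ P₂ : ELP V) : ELP V := ⟨P₁.A ∪ P₂.A, P₁.E ∪ P₂.E, P₁.R ∪ P₂.R⟩

/-- The epistemic reduct `P^Φ`: rules with some `eneg` literal in `Φ` are deleted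
(their body contains `¬⊤`), the remaining rules are reduced. -/
def eReduct (P : ELP V) (Φ : Set (Lit V)) : Program V :=
  ⟨P.A, {q | ∃ r ∈ P.R, (∀ ℓ ∈ r.eneg, ℓ ∉ Φ) ∧ q = r.reduct Φ}⟩

/-- `M` is a candidate world view of `P` w.r.t. the guess `Φ`. -/
def isCWVwrt (P : ELP V) (Φ : Set (Lit V)) (M : Set (Set V)) : Prop :=
  Φ ⊆ P.E ∧ M = (P.eReduct Φ).AS ∧ compatible P.E Φ M

/-- `M` is a candidate world view of `P`. -/
def isCWV (P : ELP V) (M : Set (Set V)) : Prop := ∃ Φ, P.isCWVwrt Φ M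

/-- `M` is a world view of `P`: a CWV whose associated guess is subset-maximal. -/
def isWV (P : ELP V) (M : Set (Set V)) : Prop :=
  ∃ Φ, P.isCWVwrt Φ M ∧ ∀ Φ' M', P.isCWVwrt Φ' M' → ¬ Φ ⊂ Φ'

/-- `Φ` is realizable in `P`: realizable in the set of models of `P^Φ`. -/
def realizable (P : ELP V) (Φ : Set (Lit V)) : Prop :=
  realizableIn P.E Φ {I | I ⊆ P.A ∧ (P.eReduct Φ).model I}

/-- The SE-function of `P`: `SE(Π^Φ)` if `Φ` is realizable in `P`, and `∅` otherwise. -/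
def SEfun (P : ELP V) (Φ : Set (Lit V)) : Set (Set V × Set V) :=
  {p | P.realizable Φ ∧ p ∈ (P.eReduct Φ).SE}

/-- CWV-equivalence. -/
def cwvEq (P₁ P₂ : ELP V) : Prop := ∀ M, P₁.isCWV M ↔ P₂.isCWV M

/-- WV-equivalence. -/
def wvEq (P₁ P₂ : ELP V) : Prop := ∀ M, P₁.isWV M ↔ P₂.isWV M

/-- Strong ELP-CWV-equivalence. -/
def strongELPCWVEq (P₁ P₂ : ELP V) : Prop :=
  ∀ Q : ELP V, Q.wf → cwvEq (P₁.union Q) (P₂.union Q)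

/-- Strong ELP-WV-equivalence. -/
def strongELPWVEq (P₁ P₂ : ELP V) : Prop :=
  ∀ Q : ELP V, Q.wf → wvEq (P₁.union Q) (P₂.union Q)

/-- Strong ASP-CWV-equivalence. -/
def strongASPCWVEq (P₁ P₂ : ELP V) : Prop :=
  ∀ Q : ELP V, Q.wf → Q.isASP → cwvEq (P₁.union Q) (P₂.union Q)

/-- Strong ASP-WV-equivalence. -/
def strongASPWVEq (P₁ P₂ : ELP V) : Prop :=
  ∀ Q : ELP V, Q.wf → Q.isASP → wvEq (P₁.union Q) (P₂.union Q)

end ELP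

/-- The Gelfond-CWA program `p' ← ¬ not ¬p` over `𝒜 = {p, p'}`, `ℰ = {not p, not ¬p}`. -/
def GelfondCWA (p p' : V) : ELP V :=
  ⟨{p, p'}, {Lit.pos p, Lit.neg p}, {⟨{p'}, ∅, ∅, ∅, {Lit.neg p}⟩}⟩

/-- The Shen-Eiter-CWA program `p' ← not p` over `𝒜 = {p, p'}`, `ℰ = {not p, not ¬p}`. -/
def ShenEiterCWA (p p' : V) : ELP V :=
  ⟨{p, p'}, {Lit.pos p, Lit.neg p}, {⟨{p'}, ∅, ∅, {Lit.pos p}, ∅⟩}⟩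

/-!
(5) ⇒ (1): a candidate world view of `Π₁ ∪ Π` for the guess `Φ` makes `Φ ∩ ℰ` realizable in
`Π₁`, so `Π₁^Φ` and `Π₂^Φ` have the same SE-models, and by the classical characterisation of
strong equivalence `Π₁^Φ ∪ Π^Φ` and `Π₂^Φ ∪ Π^Φ` have the same answer sets. A candidate world
view determines its guess, so CWV-equivalence implies WV-equivalence.

(4) ⇒ (5): fix an atom `s ∉ 𝒜`, a family `I` realizing `Φ` in `Π₁`, and `X ⊆ Y ⊆ 𝒜`. Adding the
plain program `seContext` to `G` gives the answer sets `J ∈ I` with `J ⊨ G`, and `{s} ∪ Y` iff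
`Y ⊨ G` and `X` is not a smaller model of `G^Y`. For `G = Π₁^Φ` this is a candidate world view
for `Φ`, and the only guess that can beat `Φ` is `Φ ∪ {ℓ ∈ ℰ | Y ⊭ ℓ}`, when it is realizable.
If it is not, the world view passes to `Π₂ ∪ seContext` with the same guess, and comparing the
two answer-set descriptions transfers realizability and the SE-model `(X, Y)` from `Π₁^Φ` to
`Π₂^Φ`. If it is, the literals added to `Φ` are false in `Y`, so they do not change the
SE-models `(X, Y)` of the reduct, and downward induction on the guess (`ℰ` is finite) applies.
-/

namespace Lit

variable {I B : Set V} {ℓ : Lit V}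

@[simp] lemma sat_pos {a : V} : (pos a).sat I ↔ a ∈ I := Iff.rfl

@[simp] lemma sat_neg {a : V} : (neg a).sat I ↔ a ∉ I := Iff.rfl

@[simp] lemma atom_pos {a : V} : (pos a).atom = a := rfl

@[simp] lemma atom_neg {a : V} : (neg a).atom = a := rfl

@[simp] lemma sat_flip : ℓ.flip.sat I ↔ ¬ ℓ.sat I := by
  cases ℓ <;> simp [flip]

@[simp] lemma atom_flip : ℓ.flip.atom = ℓ.atom := by
  cases ℓ <;> rfl

lemma sat_inter (h : ℓ.atom ∈ B) : ℓ.sat (I ∩ B) ↔ ℓ.sat I := by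
  cases ℓ <;> simp_all

lemma finite_of_atom_mem {A : Set V} (hA : A.Finite) {E : Set (Lit V)}
    (hE : ∀ ℓ ∈ E, ℓ.atom ∈ A) : E.Finite := by
  refine ((hA.image pos).union (hA.image neg)).subset fun ℓ hℓ => ?_
  cases ℓ
  exacts [Or.inl ⟨_, hE _ hℓ, rfl⟩, Or.inr ⟨_, hE _ hℓ, rfl⟩]

end Lit

namespace Rule

variable {I X Y B : Set V} {r : Rule V}

lemma sat_iff_redSat_self : r.sat I ↔ r.redSat I I := by
  unfold sat redSat
  tauto

lemma sat_inter (hr : r.wf B) : r.sat (I ∩ B) ↔ r.sat I := by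
  obtain ⟨hh, hp, hn⟩ := hr
  have hhead : (∃ a ∈ r.head, a ∈ I ∩ B) ↔ ∃ a ∈ r.head, a ∈ I :=
    exists_congr fun a => and_congr_right fun ha => and_iff_left (hh ha)
  simp only [sat, Set.subset_inter_iff, hp, and_true, hhead]
  exact imp_congr_left (and_congr_right' (forall₂_congr fun ℓ hℓ =>
    not_congr (Lit.sat_inter (hn ℓ hℓ))))

lemma redSat_inter (hr : r.wf B) : r.redSat (Y ∩ B) (X ∩ B) ↔ r.redSat Y X := by
  obtain ⟨hh, hp, hn⟩ := hr
  have hhead : (∃ a ∈ r.head, a ∈ X ∩ B) ↔ ∃ a ∈ r.head, a ∈ X :=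
    exists_congr fun a => and_congr_right fun ha => and_iff_left (hh ha)
  simp only [redSat, Set.subset_inter_iff, hp, and_true, hhead]
  exact imp_congr_left (forall₂_congr fun ℓ hℓ => not_congr (Lit.sat_inter (hn ℓ hℓ)))

end Rule

namespace Program

variable {G G₁ G₂ : Program V} {I X Y : Set V}

lemma model_iff_redModel_self : G.model I ↔ G.redModel I I :=
  forall₂_congr fun _ _ => Rule.sat_iff_redSat_self

lemma model_union : (G₁.union G₂).model I ↔ G₁.model I ∧ G₂.model I :=
  forall₂_or_left

lemma redModel_union : (G₁.union G₂).redModel Y X ↔ G₁.redModel Y X ∧ G₂.redModel Y X :=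
  forall₂_or_left

lemma model_inter (hG : G.wf) : G.model (I ∩ G.A) ↔ G.model I :=
  forall₂_congr fun r hr => Rule.sat_inter (hG r hr)

lemma redModel_inter (hG : G.wf) : G.redModel (Y ∩ G.A) (X ∩ G.A) ↔ G.redModel Y X :=
  forall₂_congr fun r hr => Rule.redSat_inter (hG r hr)

lemma inter_mem_SE_iff (hG : G.wf) (hXY : X ⊆ Y) :
    (X ∩ G.A, Y ∩ G.A) ∈ G.SE ↔ G.model Y ∧ G.redModel Y X := by
  simp only [SE, Set.mem_ofPred_eq, Set.inter_subset_inter_left _ hXY, Set.inter_subset_right,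
    model_inter hG, redModel_inter hG, true_and]

lemma model_and_redModel_iff_of_SE_eq (hG₁ : G₁.wf) (hG₂ : G₂.wf) (hA : G₁.A = G₂.A)
    (hSE : G₁.SE = G₂.SE) (hXY : X ⊆ Y) :
    G₁.model Y ∧ G₁.redModel Y X ↔ G₂.model Y ∧ G₂.redModel Y X := by
  rw [← inter_mem_SE_iff hG₁ hXY, ← inter_mem_SE_iff hG₂ hXY, hSE, hA]

lemma AS_union_subset_of_SE_eq (hG₁ : G₁.wf) (hG₂ : G₂.wf) (hA : G₁.A = G₂.A)
    (hSE : G₁.SE = G₂.SE) (G : Program V) : (G₁.union G).AS ⊆ (G₂.union G).AS := by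
  have htransfer := fun {X Y : Set V} (hXY : X ⊆ Y) =>
    model_and_redModel_iff_of_SE_eq hG₁ hG₂ hA hSE hXY
  rintro M ⟨hMA, hM, hmin⟩
  rw [model_union] at hM
  have hM₂ : G₂.model M := ((htransfer subset_rfl).1 ⟨hM.1, model_iff_redModel_self.1 hM.1⟩).1
  refine ⟨by simpa [union, hA] using hMA, model_union.2 ⟨hM₂, hM.2⟩, ?_⟩
  rintro ⟨M', hM'M, hred⟩
  rw [redModel_union] at hred
  exact hmin ⟨M', hM'M,
    redModel_union.2 ⟨((htransfer hM'M.subset).2 ⟨hM₂, hred.1⟩).2, hred.2⟩⟩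

lemma AS_union_eq_of_SE_eq (hG₁ : G₁.wf) (hG₂ : G₂.wf) (hA : G₁.A = G₂.A)
    (hSE : G₁.SE = G₂.SE) (G : Program V) : (G₁.union G).AS = (G₂.union G).AS :=
  (AS_union_subset_of_SE_eq hG₁ hG₂ hA hSE G).antisymm
    (AS_union_subset_of_SE_eq hG₂ hG₁ hA.symm hSE.symm G)

end Program

namespace ERule

variable {r : ERule V} {Φ D : Set (Lit V)} {X Y : Set V}

lemma reduct_wf {A : Set V} {E : Set (Lit V)} (hr : r.wf A E) (hE : ∀ ℓ ∈ E, ℓ.atom ∈ A) :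
    (r.reduct Φ).wf A := by
  obtain ⟨hh, hp, hn, hepos, heneg⟩ := hr
  refine ⟨hh, hp, ?_⟩
  rintro ℓ ((hℓ | hℓ) | ⟨m, hm, rfl⟩)
  · exact hn ℓ hℓ
  · exact hE ℓ (hepos hℓ.1)
  · simpa using hE m (heneg hm)

lemma reduct_inter {E : Set (Lit V)} (hE : r.epos ⊆ E) : r.reduct (Φ ∩ E) = r.reduct Φ := by
  simp only [reduct, Rule.mk.injEq, true_and]
  ext ℓ
  have := @hE ℓ
  simp only [Set.mem_union, Set.mem_sdiff, Set.mem_inter_iff]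
  tauto

lemma redSat_reduct_of_mem_eneg {ℓ : Lit V} (hℓ : ℓ ∈ r.eneg) (hY : ¬ ℓ.sat Y) :
    (r.reduct Φ).redSat Y X := fun hguard =>
  absurd (Lit.sat_flip.2 hY) (hguard ℓ.flip (Or.inr ⟨ℓ, hℓ, rfl⟩))

lemma redSat_reduct_union (hD : ∀ ℓ ∈ D, ¬ ℓ.sat Y) :
    (r.reduct (Φ ∪ D)).redSat Y X ↔ (r.reduct Φ).redSat Y X := by
  refine imp_congr_left ⟨fun h ℓ hℓ => ?_, fun h ℓ hℓ => ?_⟩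
  · rcases hℓ with ((hℓ | ⟨hℓe, hℓΦ⟩) | hℓ)
    · exact h ℓ (Or.inl (Or.inl hℓ))
    · by_cases hℓD : ℓ ∈ D
      · exact hD ℓ hℓD
      · exact h ℓ (Or.inl (Or.inr ⟨hℓe, fun h' => h'.elim hℓΦ hℓD⟩))
    · exact h ℓ (Or.inr hℓ)
  · rcases hℓ with ((hℓ | ⟨hℓe, hℓΦD⟩) | hℓ)
    · exact h ℓ (Or.inl (Or.inl hℓ))
    · exact h ℓ (Or.inl (Or.inr ⟨hℓe, fun h' => hℓΦD (Or.inl h')⟩))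
    · exact h ℓ (Or.inr hℓ)

end ERule

namespace ELP

variable {P Q : ELP V} {Φ D : Set (Lit V)} {X Y : Set V}

@[simp] lemma union_E : (P.union Q).E = P.E ∪ Q.E := rfl

@[simp] lemma eReduct_A : (P.eReduct Φ).A = P.A := rfl

lemma eReduct_wf (hP : P.wf) (Φ : Set (Lit V)) : (P.eReduct Φ).wf := by
  rintro _ ⟨r, hr, -, rfl⟩
  exact ERule.reduct_wf (hP.2 r hr) hP.1

lemma eReduct_union (P Q : ELP V) (Φ : Set (Lit V)) :
    (P.union Q).eReduct Φ = (P.eReduct Φ).union (Q.eReduct Φ) := by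
  simp only [eReduct, union, Program.union, Program.mk.injEq, true_and]
  ext q
  simp only [Set.mem_union, Set.mem_ofPred_eq, or_and_right, exists_or]

lemma eReduct_inter_E (hP : P.wf) (Φ : Set (Lit V)) :
    P.eReduct (Φ ∩ P.E) = P.eReduct Φ := by
  simp only [eReduct, Program.mk.injEq, true_and]
  ext q
  refine exists_congr fun r => and_congr_right fun hr => ?_
  rw [ERule.reduct_inter (hP.2 r hr).2.2.2.1]
  exact and_congr_left' (forall₂_congr fun ℓ hℓ =>
    ⟨fun h h' => h ⟨h', (hP.2 r hr).2.2.2.2 hℓ⟩, fun h h' => h h'.1⟩)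

lemma eReduct_union_redModel_iff (hD : ∀ ℓ ∈ D, ¬ ℓ.sat Y) :
    (P.eReduct (Φ ∪ D)).redModel Y X ↔ (P.eReduct Φ).redModel Y X := by
  constructor
  · rintro h _ ⟨r, hr, hΦ, rfl⟩
    by_cases hD' : ∃ ℓ ∈ r.eneg, ℓ ∈ D
    · obtain ⟨ℓ, hℓ, hℓD⟩ := hD'
      exact ERule.redSat_reduct_of_mem_eneg hℓ (hD ℓ hℓD)
    · push Not at hD'
      exact (ERule.redSat_reduct_union hD).1
        (h _ ⟨r, hr, fun ℓ hℓ h' => h'.elim (hΦ ℓ hℓ) (hD' ℓ hℓ), rfl⟩)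
  · rintro h _ ⟨r, hr, hΦD, rfl⟩
    exact (ERule.redSat_reduct_union hD).2
      (h _ ⟨r, hr, fun ℓ hℓ h' => hΦD ℓ hℓ (Or.inl h'), rfl⟩)

lemma mem_SE_eReduct_union_iff (hD : ∀ ℓ ∈ D, ¬ ℓ.sat Y) :
    (X, Y) ∈ (P.eReduct (Φ ∪ D)).SE ↔ (X, Y) ∈ (P.eReduct Φ).SE := by
  simp only [Program.SE, Set.mem_ofPred_eq, eReduct_A, Program.model_iff_redModel_self,
    eReduct_union_redModel_iff hD]

end ELP

def Program.toELP (G : Program V) : ELP V := ⟨G.A, ∅, Rule.toERule '' G.R⟩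

namespace Program

variable {G : Program V}

lemma toELP_wf (hG : G.wf) : G.toELP.wf := by
  refine ⟨fun ℓ hℓ => hℓ.elim, ?_⟩
  rintro _ ⟨r, hr, rfl⟩
  obtain ⟨hh, hp, hn⟩ := hG r hr
  exact ⟨hh, hp, hn, subset_rfl, subset_rfl⟩

lemma toELP_isASP : G.toELP.isASP :=
  ⟨rfl, by rintro _ ⟨r, -, rfl⟩; exact ⟨rfl, rfl⟩⟩

@[simp] lemma toELP_E : G.toELP.E = ∅ := rfl

@[simp] lemma eReduct_toELP (Φ : Set (Lit V)) : G.toELP.eReduct Φ = G := by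
  have hred : ∀ r : Rule V, r.toERule.reduct Φ = r := fun r => by
    simp [Rule.toERule, ERule.reduct]
  obtain ⟨A, R⟩ := G
  simp only [ELP.eReduct, toELP, Program.mk.injEq, true_and]
  ext q
  simp only [Set.mem_image, exists_exists_and_eq_and, hred]
  simp [Rule.toERule]

end Program

lemma compatible.inter {E Φ : Set (Lit V)} {I : Set (Set V)} (h : compatible E Φ I) :
    compatible E (Φ ∩ E) I :=
  ⟨h.1, fun ℓ hℓ => h.2.1 ℓ hℓ.1, fun ℓ hℓ => h.2.2 ℓ ⟨hℓ.1, fun hΦ => hℓ.2 ⟨hΦ, hℓ.1⟩⟩⟩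

lemma compatible.guess_eq {E Φ : Set (Lit V)} {I : Set (Set V)} (hΦ : Φ ⊆ E)
    (h : compatible E Φ I) : Φ = {ℓ ∈ E | ∃ J ∈ I, ¬ ℓ.sat J} := by
  ext ℓ
  refine ⟨fun hℓ => ⟨hΦ hℓ, h.2.1 ℓ hℓ⟩, fun ⟨hℓE, J, hJ, hℓJ⟩ => ?_⟩
  by_contra hℓΦ
  exact hℓJ (h.2.2 ℓ ⟨hℓE, hℓΦ⟩ J hJ)

namespace ELP

variable {P P' Q U₁ U₂ : ELP V} {G : Program V} {Φ : Set (Lit V)} {M : Set (Set V)}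

lemma eReduct_union_toELP (Φ : Set (Lit V)) :
    (P.union G.toELP).eReduct Φ = (P.eReduct Φ).union G := by
  rw [eReduct_union, Program.eReduct_toELP]

lemma isCWVwrt.guess_eq {Φ₁ Φ₂ : Set (Lit V)} (h₁ : U₁.isCWVwrt Φ₁ M) (h₂ : U₂.isCWVwrt Φ₂ M)
    (hE : U₁.E = U₂.E) : Φ₁ = Φ₂ := by
  rw [h₁.2.2.guess_eq h₁.1, h₂.2.2.guess_eq h₂.1, hE]

lemma isWV_of_isWV_of_cwvEq (hE : U₁.E = U₂.E) (h : U₁.cwvEq U₂) (hM : U₁.isWV M) :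
    U₂.isWV M := by
  obtain ⟨Φ, hΦ, hmax⟩ := hM
  obtain ⟨Φ₂, hΦ₂⟩ := (h M).1 ⟨Φ, hΦ⟩
  refine ⟨Φ₂, hΦ₂, fun Φ' M' hΦ' hlt => ?_⟩
  obtain ⟨Φ₁', hΦ₁'⟩ := (h M').2 ⟨Φ', hΦ'⟩
  obtain rfl : Φ = Φ₂ := hΦ.guess_eq hΦ₂ hE
  obtain rfl : Φ₁' = Φ' := hΦ₁'.guess_eq hΦ' hE
  exact hmax _ _ hΦ₁' hlt

lemma wvEq_of_cwvEq (hE : U₁.E = U₂.E) (h : U₁.cwvEq U₂) : U₁.wvEq U₂ := fun _ =>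
  ⟨isWV_of_isWV_of_cwvEq hE h, isWV_of_isWV_of_cwvEq hE.symm fun M => (h M).symm⟩

lemma isCWVwrt_of_isWV_of_wvEq (hE : U₁.E = U₂.E) (h : U₁.wvEq U₂) (hM : U₁.isWV M)
    (hΦ : U₁.isCWVwrt Φ M) : U₂.isCWVwrt Φ M := by
  obtain ⟨Φ₂, hΦ₂, -⟩ := (h M).1 hM
  rwa [hΦ.guess_eq hΦ₂ hE]

lemma strongASPWVEq.symm (h : P.strongASPWVEq P') : P'.strongASPWVEq P :=
  fun Q hQ hQ' M => (h Q hQ hQ' M).symm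

lemma isCWVwrt.realizable_inter (hP : P.wf) (h : (P.union Q).isCWVwrt Φ M) :
    P.realizable (Φ ∩ P.E) := by
  obtain ⟨-, rfl, hne, hwit, hsat⟩ := h
  have hEsat : ∀ ℓ ∈ P.E, ∀ J : Set V, ℓ.sat (J ∩ P.A) ↔ ℓ.sat J :=
    fun ℓ hℓ J => Lit.sat_inter (hP.1 ℓ hℓ)
  refine ⟨(· ∩ P.A) '' ((P.union Q).eReduct Φ).AS, ?_, hne.image _, ?_, ?_⟩
  · rintro _ ⟨J, ⟨-, hJ, -⟩, rfl⟩
    rw [eReduct_union, Program.model_union] at hJ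
    refine ⟨Set.inter_subset_right, ?_⟩
    rw [eReduct_inter_E hP]
    exact (Program.model_inter (eReduct_wf hP Φ)).2 hJ.1
  · rintro ℓ ⟨hℓΦ, hℓE⟩
    obtain ⟨J, hJ, hℓJ⟩ := hwit ℓ hℓΦ
    exact ⟨J ∩ P.A, ⟨J, hJ, rfl⟩, (hEsat ℓ hℓE J).not.2 hℓJ⟩
  · rintro ℓ ⟨hℓE, hℓΦ⟩ _ ⟨J, hJ, rfl⟩
    exact (hEsat ℓ hℓE J).2 (hsat ℓ ⟨Or.inl hℓE, fun h => hℓΦ ⟨h, hℓE⟩⟩ J hJ)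

lemma realizable.inter (hP : P.wf) (h : P.realizable Φ) : P.realizable (Φ ∩ P.E) := by
  obtain ⟨I, hI, hcomp⟩ := h
  exact ⟨I, by rwa [eReduct_inter_E hP], hcomp.inter⟩

lemma realizable_iff_SEfun_nonempty : P.realizable Φ ↔ (P.SEfun Φ).Nonempty := by
  refine ⟨fun h => ?_, fun ⟨_, h, _⟩ => h⟩
  obtain ⟨I, hI, ⟨J, hJ⟩, -⟩ := id h
  obtain ⟨hJA, hJ⟩ := hI hJ
  exact ⟨(J, J), h, subset_rfl, hJA, hJ, Program.model_iff_redModel_self.1 hJ⟩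

lemma SE_eReduct_eq_of_SEfun_eq (h : P.SEfun Φ = P'.SEfun Φ) (hP : P.realizable Φ) :
    (P.eReduct Φ).SE = (P'.eReduct Φ).SE := by
  have hP' : P'.realizable Φ := realizable_iff_SEfun_nonempty.2
    (h ▸ realizable_iff_SEfun_nonempty.1 hP)
  ext p
  exact ⟨fun hp => ((Set.ext_iff.1 h p).1 ⟨hP, hp⟩).2,
    fun hp => ((Set.ext_iff.1 h p).2 ⟨hP', hp⟩).2⟩

end ELP

section SEFunctionToStrongEquivalence

variable {A : Set V} {E : Set (Lit V)} {R R' : Set (ERule V)}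

lemma isCWVwrt_union_of_SEfun_eq (hP : (ELP.mk A E R).wf) (hP' : (ELP.mk A E R').wf)
    (h : ∀ Φ, (ELP.mk A E R).SEfun Φ = (ELP.mk A E R').SEfun Φ) {Q : ELP V}
    {Φ : Set (Lit V)} {M : Set (Set V)} (hM : ((ELP.mk A E R).union Q).isCWVwrt Φ M) :
    ((ELP.mk A E R').union Q).isCWVwrt Φ M := by
  have hSE : ((ELP.mk A E R).eReduct Φ).SE = ((ELP.mk A E R').eReduct Φ).SE := by
    rw [← ELP.eReduct_inter_E hP, ← ELP.eReduct_inter_E hP']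
    exact ELP.SE_eReduct_eq_of_SEfun_eq (h _) (hM.realizable_inter hP)
  obtain ⟨hΦ, rfl, hcomp⟩ := hM
  refine ⟨hΦ, ?_, hcomp⟩
  rw [ELP.eReduct_union, ELP.eReduct_union]
  exact Program.AS_union_eq_of_SE_eq (ELP.eReduct_wf hP Φ) (ELP.eReduct_wf hP' Φ) rfl hSE _

lemma strongELPCWVEq_of_SEfun_eq (hP : (ELP.mk A E R).wf) (hP' : (ELP.mk A E R').wf)
    (h : ∀ Φ, (ELP.mk A E R).SEfun Φ = (ELP.mk A E R').SEfun Φ) :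
    (ELP.mk A E R).strongELPCWVEq (ELP.mk A E R') := fun _ _ _ =>
  ⟨fun ⟨Φ, hΦ⟩ => ⟨Φ, isCWVwrt_union_of_SEfun_eq hP hP' h hΦ⟩,
    fun ⟨Φ, hΦ⟩ => ⟨Φ, isCWVwrt_union_of_SEfun_eq hP' hP (fun Φ => (h Φ).symm) hΦ⟩⟩

end SEFunctionToStrongEquivalence

lemma Set.insert_inter_of_notMem_of_subset {A Z : Set V} {s : V} (hs : s ∉ A) (hZA : Z ⊆ A) :
    insert s Z ∩ A = Z := by
  rw [Set.insert_inter_of_notMem hs, Set.inter_eq_left.2 hZA]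

/-- The rules `s ← ¬¬s`, `a ← ¬¬a, ¬s` (`a ∈ A`), `← Z, ¬s, ¬(A \ Z)` (`Z ⊆ A`, `Z ∉ F`),
`a ← s` (`a ∈ X`), `a ← b, s` (`a, b ∈ Y \ X`) and `← s, Z, ¬(A \ Z)` (`Z ⊆ A`, `Z ≠ Y`).
With `s` false they guess an interpretation of `A` lying in `F`; with `s` true they pin the
`A`-part to `Y` and leave `insert s X` as the only candidate for a smaller model of the reduct. -/
def seContext (A : Set V) (s : V) (F : Set (Set V)) (X Y : Set V) : Program V :=
  ⟨insert s A, {r | r = ⟨{s}, ∅, {.neg s}⟩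
    ∨ (∃ a ∈ A, r = ⟨{a}, ∅, {.neg a, .pos s}⟩)
    ∨ (∃ Z ⊆ A, Z ∉ F ∧ r = ⟨∅, Z, insert (.pos s) (.pos '' (A \ Z))⟩)
    ∨ (∃ a ∈ X, r = ⟨{a}, {s}, ∅⟩)
    ∨ (∃ a ∈ Y \ X, ∃ b ∈ Y \ X, r = ⟨{a}, {b, s}, ∅⟩)
    ∨ (∃ Z ⊆ A, Z ≠ Y ∧ r = ⟨∅, insert s Z, .pos '' (A \ Z)⟩)}⟩

namespace seContext

variable {A : Set V} {s : V} {F : Set (Set V)} {X Y J M : Set V}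

lemma wf (hXY : X ⊆ Y) (hYA : Y ⊆ A) : (seContext A s F X Y).wf := by
  rintro r (rfl | ⟨a, ha, rfl⟩ | ⟨Z, hZA, -, rfl⟩ | ⟨a, ha, rfl⟩ | ⟨a, ha, b, hb, rfl⟩ |
    ⟨Z, hZA, -, rfl⟩) <;>
    simp_all [seContext, Rule.wf, Set.subset_def, Set.mem_insert_iff]
  all_goals rintro _ x hx - rfl; exact Or.inr hx

lemma model_of_mem (hs : s ∉ A) (hJA : J ⊆ A) (hJF : J ∈ F) :
    (seContext A s F X Y).model J := by
  have hsJ : s ∉ J := fun h => hs (hJA h)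
  rintro r (rfl | ⟨a, -, rfl⟩ | ⟨Z, -, hZF, rfl⟩ | ⟨a, -, rfl⟩ | ⟨a, -, b, -, rfl⟩ |
    ⟨Z, -, -, rfl⟩) <;> rintro ⟨hpos, hneg⟩
  · exact absurd hsJ (hneg _ rfl)
  · exact ⟨a, rfl, not_not.1 (hneg _ (Or.inl rfl))⟩
  · have hZJ : Z = J := Set.Subset.antisymm hpos fun x hx => by
      by_contra hxZ
      exact hneg _ (Or.inr ⟨x, ⟨hJA hx, hxZ⟩, rfl⟩) hx
    exact absurd (hZJ ▸ hJF) hZF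
  · exact absurd (hpos rfl) hsJ
  · exact absurd (hpos (Or.inr rfl)) hsJ
  · exact absurd (hpos (Set.mem_insert _ _)) hsJ

lemma eq_of_subset_of_forall_not_sat (hYA : Y ⊆ A) {Z W : Set V} (hZY : Z ⊆ Y) (hYW : Y ⊆ W)
    (h : ∀ ℓ ∈ Lit.pos '' (A \ Z), ¬ ℓ.sat W) : Z = Y :=
  hZY.antisymm fun y hy => by_contra fun hyZ => h _ ⟨y, ⟨hYA hy, hyZ⟩, rfl⟩ (hYW hy)

lemma model_insert (hs : s ∉ A) (hXY : X ⊆ Y) (hYA : Y ⊆ A) :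
    (seContext A s F X Y).model (insert s Y) := by
  rintro r (rfl | ⟨a, -, rfl⟩ | ⟨Z, -, -, rfl⟩ | ⟨a, ha, rfl⟩ | ⟨a, ha, b, -, rfl⟩ |
    ⟨Z, hZA, hZY, rfl⟩) <;> rintro ⟨hpos, hneg⟩
  · exact ⟨s, rfl, Set.mem_insert _ _⟩
  · exact absurd (Set.mem_insert _ _) (hneg _ (Or.inr rfl))
  · exact absurd (Set.mem_insert _ _) (hneg _ (Or.inl rfl))
  · exact ⟨a, rfl, Or.inr (hXY ha)⟩
  · exact ⟨a, rfl, Or.inr ha.1⟩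
  · exact absurd (eq_of_subset_of_forall_not_sat hYA
      ((Set.insert_subset_insert_iff fun h => hs (hZA h)).1 hpos) (Set.subset_insert _ _) hneg) hZY

lemma redModel_insert (hs : s ∉ A) (hXY : X ⊆ Y) (hYA : Y ⊆ A) :
    (seContext A s F X Y).redModel (insert s Y) (insert s X) := by
  rintro r (rfl | ⟨a, -, rfl⟩ | ⟨Z, -, -, rfl⟩ | ⟨a, ha, rfl⟩ | ⟨a, -, b, hb, rfl⟩ |
    ⟨Z, hZA, hZY, rfl⟩) <;> intro hneg hpos
  · exact ⟨s, rfl, Set.mem_insert _ _⟩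
  · exact absurd (Set.mem_insert _ _) (hneg _ (Or.inr rfl))
  · exact absurd (Set.mem_insert _ _) (hneg _ (Or.inl rfl))
  · exact ⟨a, rfl, Or.inr ha⟩
  · exact ((hpos (Or.inl rfl)).elim (fun h => hs (h ▸ hYA hb.1)) hb.2).elim
  · exact absurd (eq_of_subset_of_forall_not_sat hYA
      (((Set.insert_subset_insert_iff fun h => hs (hZA h)).1 hpos).trans hXY)
      (Set.subset_insert _ _) hneg) hZY

lemma mem_of_model (hs : s ∉ A) (hMA : M ⊆ A) (hM : (seContext A s F X Y).model M) :
    M ∈ F := by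
  by_contra hMF
  refine (hM _ (Or.inr (Or.inr (Or.inl ⟨M, hMA, hMF, rfl⟩))) ⟨subset_rfl, ?_⟩).elim
    fun _ h => h.1
  rintro _ (rfl | ⟨a, ha, rfl⟩)
  · exact fun h => hs (hMA h)
  · exact ha.2

lemma eq_insert_of_model (hsM : s ∈ M) (hMA : M ⊆ insert s A)
    (hM : (seContext A s F X Y).model M) : M = insert s Y := by
  have hMAY : M ∩ A = Y := by
    by_contra hne
    refine (hM _ (Or.inr (Or.inr (Or.inr (Or.inr (Or.inr
      ⟨M ∩ A, Set.inter_subset_right, hne, rfl⟩))))) ⟨Set.insert_subset hsM Set.inter_subset_left,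
      ?_⟩).elim fun _ h => h.1
    rintro _ ⟨a, ha, rfl⟩ haM
    exact ha.2 ⟨haM, ha.1⟩
  rw [← hMAY]
  ext x
  refine ⟨fun hx => (hMA hx).imp id fun hxA => ⟨hx, hxA⟩, ?_⟩
  rintro (rfl | hx)
  exacts [hsM, hx.1]

lemma subset_of_redModel (hs : s ∉ A) (hJA : J ⊆ A) {M' : Set V}
    (h : (seContext A s F X Y).redModel J M') : J ⊆ M' := by
  intro a ha
  obtain ⟨_, rfl, haM'⟩ := h _ (Or.inr (Or.inl ⟨a, hJA ha, rfl⟩))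
    (by rintro _ (rfl | rfl); exacts [not_not.2 ha, fun h => hs (hJA h)]) (Set.empty_subset _)
  exact haM'

lemma eq_of_redModel_insert {M' : Set V}
    (hM' : M' ⊆ insert s Y) (h : (seContext A s F X Y).redModel (insert s Y) M') :
    M' = insert s X ∨ M' = insert s Y := by
  have hsM' : s ∈ M' := by
    obtain ⟨_, rfl, hsM'⟩ := h _ (Or.inl rfl)
      (by rintro _ rfl; exact not_not.2 (Set.mem_insert _ _)) (Set.empty_subset _)
    exact hsM'
  have hXM' : X ⊆ M' := fun a ha => by
    obtain ⟨_, rfl, haM'⟩ := h _ (Or.inr (Or.inr (Or.inr (Or.inl ⟨a, ha, rfl⟩))))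
      (fun _ h => h.elim) (Set.singleton_subset_iff.2 hsM')
    exact haM'
  by_cases hb : ∃ b ∈ Y \ X, b ∈ M'
  · obtain ⟨b, hb, hbM'⟩ := hb
    refine Or.inr (hM'.antisymm (Set.insert_subset hsM' fun a ha => ?_))
    by_cases haX : a ∈ X
    · exact hXM' haX
    obtain ⟨_, rfl, haM'⟩ := h _
      (Or.inr (Or.inr (Or.inr (Or.inr (Or.inl ⟨a, ⟨ha, haX⟩, b, hb, rfl⟩)))))
      (fun _ h => h.elim) (by rintro _ (rfl | rfl) <;> assumption)
    exact haM'
  · push Not at hb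
    refine Or.inl (Set.Subset.antisymm (fun x hx => ?_) (Set.insert_subset hsM' hXM'))
    rcases hM' hx with rfl | hxY
    · exact Set.mem_insert _ _
    · exact Or.inr (by_contra fun hxX => hb x ⟨hxY, hxX⟩ hx)

end seContext

/-- The condition for `insert s Y` to be an answer set of `G ∪ seContext A s F X Y`. -/
def Program.minimalAgainst (G : Program V) (X Y : Set V) : Prop :=
  G.model Y ∧ (X = Y ∨ ¬ G.redModel Y X)

section seContextAnswerSets

variable {A : Set V} {s : V} {F : Set (Set V)} {X Y J M : Set V} {G : Program V}

lemma mem_AS_union_seContext_iff (hG : G.wf) (hGA : G.A = A) (hs : s ∉ A)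
    (hF : ∀ J ∈ F, J ⊆ A) (hXY : X ⊆ Y) (hYA : Y ⊆ A) :
    M ∈ (G.union (seContext A s F X Y)).AS ↔
      (M ∈ F ∧ G.model M) ∨ (M = insert s Y ∧ G.minimalAgainst X Y) := by
  have hX := Set.insert_inter_of_notMem_of_subset hs (hXY.trans hYA)
  have hY := Set.insert_inter_of_notMem_of_subset hs hYA
  have hmodel : G.model (insert s Y) ↔ G.model Y := by
    rw [← Program.model_inter hG, hGA, hY]
  have hredModel : G.redModel (insert s Y) (insert s X) ↔ G.redModel Y X := by
    rw [← Program.redModel_inter hG, hGA, hY, hX]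
  have hinsert : insert s X = insert s Y ↔ X = Y :=
    ⟨fun h => by rw [← hX, h, hY], congrArg _⟩
  have hUA : (G.union (seContext A s F X Y)).A = insert s A := by
    simp [Program.union, seContext, hGA]
  simp only [Program.AS, Program.answerSet, Set.mem_ofPred_eq, hUA, Program.model_union,
    Program.redModel_union]
  constructor
  · rintro ⟨hMA, ⟨hMG, hMC⟩, hmin⟩
    by_cases hsM : s ∈ M
    · obtain rfl := seContext.eq_insert_of_model hsM hMA hMC
      refine Or.inr ⟨rfl, hmodel.1 hMG, or_iff_not_imp_left.2 fun hXY' hred => hmin ?_⟩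
      refine ⟨insert s X, ?_, hredModel.2 hred, seContext.redModel_insert hs hXY hYA⟩
      exact (Set.insert_subset_insert hXY).ssubset_of_ne (hinsert.not.2 hXY')
    · exact Or.inl ⟨seContext.mem_of_model hs (fun x hx => (hMA hx).resolve_left
        fun h => hsM (h ▸ hx)) hMC, hMG⟩
  · rintro (⟨hMF, hMG⟩ | ⟨rfl, hYG, hXY'⟩)
    · have hMA := hF M hMF
      refine ⟨hMA.trans (Set.subset_insert _ _), ⟨hMG, seContext.model_of_mem hs hMA hMF⟩, ?_⟩
      rintro ⟨M', hM'M, -, hM'C⟩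
      exact hM'M.not_subset (seContext.subset_of_redModel hs hMA hM'C)
    · refine ⟨Set.insert_subset_insert hYA, ⟨hmodel.2 hYG, seContext.model_insert hs hXY hYA⟩, ?_⟩
      rintro ⟨M', hM'Y, hM'G, hM'C⟩
      rcases seContext.eq_of_redModel_insert hM'Y.subset hM'C with rfl | rfl
      · exact hXY'.elim (fun h => hM'Y.ne (hinsert.2 h)) fun h => h (hredModel.1 hM'G)
      · exact hM'Y.ne rfl

lemma mem_AS_union_seContext_iff_of_mem (hG : G.wf) (hGA : G.A = A) (hs : s ∉ A)
    (hF : ∀ J ∈ F, J ⊆ A) (hXY : X ⊆ Y) (hYA : Y ⊆ A) (hJ : J ∈ F) :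
    J ∈ (G.union (seContext A s F X Y)).AS ↔ G.model J := by
  rw [mem_AS_union_seContext_iff hG hGA hs hF hXY hYA]
  refine ⟨fun h => h.elim And.right fun h => absurd (h.1 ▸ Set.mem_insert s Y) ?_,
    fun h => Or.inl ⟨hJ, h⟩⟩
  exact fun hsJ => hs (hF J hJ hsJ)

lemma insert_mem_AS_union_seContext_iff (hG : G.wf) (hGA : G.A = A) (hs : s ∉ A)
    (hF : ∀ J ∈ F, J ⊆ A) (hXY : X ⊆ Y) (hYA : Y ⊆ A) :
    insert s Y ∈ (G.union (seContext A s F X Y)).AS ↔ G.minimalAgainst X Y := by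
  rw [mem_AS_union_seContext_iff hG hGA hs hF hXY hYA]
  exact ⟨fun h => h.elim (fun h => absurd (hF _ h.1 (Set.mem_insert s Y)) hs) And.right,
    fun h => Or.inr ⟨rfl, h⟩⟩

end seContextAnswerSets

def refuted (E : Set (Lit V)) (Y : Set V) : Set (Lit V) := {ℓ ∈ E | ¬ ℓ.sat Y}

section StrongWVEquivalence

variable {A : Set V} {E : Set (Lit V)} {R R' : Set (ERule V)} {s : V} {Φ Ψ : Set (Lit V)}
  {I M : Set (Set V)} {X Y : Set V}

lemma eq_union_refuted_of_isCWVwrt (hP : (ELP.mk A E R).wf) (hs : s ∉ A)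
    (hIA : ∀ J ∈ I, J ⊆ A) (hIΦ : ∀ ℓ ∈ E \ Φ, ∀ J ∈ I, ℓ.sat J) (hXY : X ⊆ Y) (hYA : Y ⊆ A)
    (h : ((ELP.mk A E R).union (seContext A s I X Y).toELP).isCWVwrt Ψ M) (hΦΨ : Φ ⊂ Ψ) :
    Ψ = Φ ∪ refuted E Y ∧ (ELP.mk A E R).realizable Ψ := by
  have hreal := h.realizable_inter hP
  obtain ⟨hΨE, rfl, -, hwit, hsat⟩ := h
  simp only [ELP.union_E, Program.toELP_E, Set.union_empty] at hΨE hsat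
  have hΨ : Ψ ∩ E = Ψ := Set.inter_eq_left.2 hΨE
  have hsatY : ∀ ℓ ∈ E, ℓ.sat (insert s Y) ↔ ℓ.sat Y := fun ℓ hℓ => by
    rw [← Lit.sat_inter (hP.1 ℓ hℓ), Set.insert_inter_of_notMem_of_subset hs hYA]
  have hnew : ∀ ℓ ∈ Ψ, ℓ ∉ Φ → ℓ ∈ refuted E Y ∧
      insert s Y ∈ ((ELP.mk A E R).union (seContext A s I X Y).toELP |>.eReduct Ψ).AS := by
    intro ℓ hℓΨ hℓΦ
    obtain ⟨J, hJ, hℓJ⟩ := hwit ℓ hℓΨ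
    have hJ' := hJ
    rw [ELP.eReduct_union_toELP,
      mem_AS_union_seContext_iff (A := A) (ELP.eReduct_wf hP Ψ) rfl hs hIA hXY hYA] at hJ'
    rcases hJ' with ⟨hJI, -⟩ | ⟨rfl, -⟩
    · exact absurd (hIΦ ℓ ⟨hΨE hℓΨ, hℓΦ⟩ J hJI) hℓJ
    · exact ⟨⟨hΨE hℓΨ, (hsatY ℓ (hΨE hℓΨ)).not.1 hℓJ⟩, hJ⟩
  obtain ⟨ℓ₀, hℓ₀Ψ, hℓ₀Φ⟩ := Set.exists_of_ssubset hΦΨ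
  have hYM := (hnew ℓ₀ hℓ₀Ψ hℓ₀Φ).2
  refine ⟨Set.Subset.antisymm (fun ℓ hℓ => ?_) (Set.union_subset hΦΨ.subset fun ℓ hℓ => ?_),
    hΨ ▸ hreal⟩
  · by_cases hℓΦ : ℓ ∈ Φ
    exacts [Or.inl hℓΦ, Or.inr (hnew ℓ hℓ hℓΦ).1]
  · by_contra hℓΨ
    exact hℓ.2 ((hsatY ℓ hℓ.1).1 (hsat ℓ ⟨hℓ.1, hℓΨ⟩ _ hYM))

lemma AS_union_seContext_eq (hH : (ELP.mk A E R).strongASPWVEq (ELP.mk A E R'))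
    (hP : (ELP.mk A E R).wf) (hs : s ∉ A) (hΦ : Φ ⊆ E)
    (hI : I ⊆ {J | J ⊆ A ∧ ((ELP.mk A E R).eReduct Φ).model J}) (hcomp : compatible E Φ I)
    (hXY : X ⊆ Y) (hYA : Y ⊆ A)
    (hbranch : ((ELP.mk A E R).eReduct Φ).minimalAgainst X Y → refuted E Y ⊆ Φ)
    (hmax : Φ ⊂ Φ ∪ refuted E Y → ¬ (ELP.mk A E R).realizable (Φ ∪ refuted E Y)) :
    (((ELP.mk A E R).eReduct Φ).union (seContext A s I X Y)).AS =
      (((ELP.mk A E R').eReduct Φ).union (seContext A s I X Y)).AS := by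
  have hIA : ∀ J ∈ I, J ⊆ A := fun J hJ => (hI hJ).1
  have hIM : I ⊆ (((ELP.mk A E R).eReduct Φ).union (seContext A s I X Y)).AS := fun J hJ =>
    (mem_AS_union_seContext_iff_of_mem (A := A) (ELP.eReduct_wf hP Φ) rfl hs hIA hXY hYA hJ).2
      (hI hJ).2
  have hcwv : ((ELP.mk A E R).union (seContext A s I X Y).toELP).isCWVwrt Φ
      (((ELP.mk A E R).eReduct Φ).union (seContext A s I X Y)).AS := by
    refine ⟨by simpa using hΦ, (ELP.eReduct_union_toELP Φ).symm ▸ rfl, ?_⟩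
    obtain ⟨⟨J₀, hJ₀⟩, hwit, hsat⟩ := hcomp
    refine ⟨⟨J₀, hIM hJ₀⟩, fun ℓ hℓ => (hwit ℓ hℓ).imp fun J hJ => ⟨hIM hJ.1, hJ.2⟩, ?_⟩
    simp only [ELP.union_E, Program.toELP_E, Set.union_empty]
    intro ℓ hℓ J hJ
    rw [mem_AS_union_seContext_iff (A := A) (ELP.eReduct_wf hP Φ) rfl hs hIA hXY hYA] at hJ
    rcases hJ with ⟨hJI, -⟩ | ⟨rfl, hY⟩
    · exact hsat ℓ hℓ J hJI
    · rw [← Lit.sat_inter (hP.1 ℓ hℓ.1), Set.insert_inter_of_notMem_of_subset hs hYA]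
      by_contra hℓY
      exact hℓ.2 (hbranch hY ⟨hℓ.1, hℓY⟩)
  have hwv : ((ELP.mk A E R).union (seContext A s I X Y).toELP).isWV
      (((ELP.mk A E R).eReduct Φ).union (seContext A s I X Y)).AS := by
    refine ⟨Φ, hcwv, fun Ψ M hΨ hΦΨ => ?_⟩
    obtain ⟨rfl, hreal⟩ := eq_union_refuted_of_isCWVwrt hP hs hIA hcomp.2.2 hXY hYA hΨ hΦΨ
    exact hmax hΦΨ hreal
  have hwvEq := hH (seContext A s I X Y).toELP (Program.toELP_wf (seContext.wf hXY hYA))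
    Program.toELP_isASP
  rw [(ELP.isCWVwrt_of_isWV_of_wvEq (by simp) hwvEq hwv hcwv).2.1, ELP.eReduct_union_toELP]

lemma models_eReduct_of_strongASPWVEq (hH : (ELP.mk A E R).strongASPWVEq (ELP.mk A E R'))
    (hP : (ELP.mk A E R).wf) (hP' : (ELP.mk A E R').wf) (hs : s ∉ A) (hΦ : Φ ⊆ E)
    (hI : I ⊆ {J | J ⊆ A ∧ ((ELP.mk A E R).eReduct Φ).model J}) (hcomp : compatible E Φ I) :
    ∀ J ∈ I, ((ELP.mk A E R').eReduct Φ).model J := by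
  obtain ⟨J₀, hJ₀⟩ := hcomp.1
  have hJ₀A : J₀ ⊆ A := (hI hJ₀).1
  have hrefuted : refuted E J₀ ⊆ Φ := fun ℓ hℓ => by
    by_contra hℓΦ
    exact hℓ.2 (hcomp.2.2 ℓ ⟨hℓ.1, hℓΦ⟩ J₀ hJ₀)
  have hAS := AS_union_seContext_eq hH hP hs hΦ hI hcomp subset_rfl hJ₀A (fun _ => hrefuted)
    fun hlt => absurd (Set.union_eq_left.2 hrefuted) hlt.ne'
  intro J hJ
  have hIA : ∀ J ∈ I, J ⊆ A := fun J hJ => (hI hJ).1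
  rw [← mem_AS_union_seContext_iff_of_mem (A := A) (ELP.eReduct_wf hP' Φ) rfl hs hIA subset_rfl
    hJ₀A hJ, ← hAS, mem_AS_union_seContext_iff_of_mem (A := A) (ELP.eReduct_wf hP Φ) rfl hs hIA
    subset_rfl hJ₀A hJ]
  exact (hI hJ).2

lemma realizable_of_strongASPWVEq (hH : (ELP.mk A E R).strongASPWVEq (ELP.mk A E R'))
    (hP : (ELP.mk A E R).wf) (hP' : (ELP.mk A E R').wf) (hs : s ∉ A)
    (h : (ELP.mk A E R).realizable Φ) : (ELP.mk A E R').realizable Φ := by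
  obtain ⟨I, hI, hcomp⟩ := h
  have hI' : I ⊆ {J | J ⊆ A ∧ ((ELP.mk A E R).eReduct (Φ ∩ E)).model J} := by
    rwa [← ELP.eReduct_inter_E hP] at hI
  refine ⟨I, fun J hJ => ⟨(hI hJ).1, ?_⟩, hcomp⟩
  rw [← ELP.eReduct_inter_E hP']
  exact models_eReduct_of_strongASPWVEq hH hP hP' hs Set.inter_subset_right hI' hcomp.inter J hJ

lemma minimalAgainst_of_strongASPWVEq (hH : (ELP.mk A E R).strongASPWVEq (ELP.mk A E R'))
    (hP : (ELP.mk A E R).wf) (hP' : (ELP.mk A E R').wf) (hs : s ∉ A) (hΦ : Φ ⊆ E)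
    (hI : I ⊆ {J | J ⊆ A ∧ ((ELP.mk A E R).eReduct Φ).model J}) (hcomp : compatible E Φ I)
    (hXY : X ⊆ Y) (hYA : Y ⊆ A)
    (hmax : Φ ⊂ Φ ∪ refuted E Y → ¬ (ELP.mk A E R).realizable (Φ ∪ refuted E Y))
    (h : ((ELP.mk A E R').eReduct Φ).minimalAgainst X Y) :
    ((ELP.mk A E R).eReduct Φ).minimalAgainst X Y := by
  by_contra h'
  have hIA : ∀ J ∈ I, J ⊆ A := fun J hJ => (hI hJ).1
  have hAS := AS_union_seContext_eq hH hP hs hΦ hI hcomp hXY hYA (absurd · h') hmax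
  rw [← insert_mem_AS_union_seContext_iff (A := A) (ELP.eReduct_wf hP' Φ) rfl hs hIA hXY hYA,
    ← hAS, insert_mem_AS_union_seContext_iff (A := A) (ELP.eReduct_wf hP Φ) rfl hs hIA hXY hYA] at h
  exact h' h

lemma SE_eReduct_subset_of_strongASPWVEq (hH : (ELP.mk A E R).strongASPWVEq (ELP.mk A E R'))
    (hP : (ELP.mk A E R).wf) (hP' : (ELP.mk A E R').wf) (hs : s ∉ A) (hE : E.Finite)
    (hΦ : Φ ⊆ E) (hreal : (ELP.mk A E R).realizable Φ) :
    ((ELP.mk A E R).eReduct Φ).SE ⊆ ((ELP.mk A E R').eReduct Φ).SE := by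
  refine (hE.finite_subsets.wellFoundedOn (r := (· ⊃ ·))).induction (P := fun Φ =>
    (ELP.mk A E R).realizable Φ → ((ELP.mk A E R).eReduct Φ).SE ⊆ ((ELP.mk A E R').eReduct Φ).SE)
    hΦ (fun Φ hΦ IH ⟨I, hI, hcomp⟩ => ?_) hreal
  rintro ⟨X, Y⟩ ⟨hXY, hYA, hY, hX⟩
  have hrefuted : ∀ ℓ ∈ refuted E Y, ¬ ℓ.sat Y := fun ℓ hℓ => hℓ.2
  by_cases hext : Φ ⊂ Φ ∪ refuted E Y ∧ (ELP.mk A E R).realizable (Φ ∪ refuted E Y)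
  · rw [← ELP.mem_SE_eReduct_union_iff hrefuted]
    exact IH _ (Set.union_subset hΦ (Set.sep_subset _ _)) hext.1 hext.2
      ((ELP.mem_SE_eReduct_union_iff hrefuted).2 ⟨hXY, hYA, hY, hX⟩)
  have hmax (h : Φ ⊂ Φ ∪ refuted E Y) : ¬ (ELP.mk A E R).realizable (Φ ∪ refuted E Y) :=
    fun h' => hext ⟨h, h'⟩
  have hmax' (h : Φ ⊂ Φ ∪ refuted E Y) : ¬ (ELP.mk A E R').realizable (Φ ∪ refuted E Y) :=
    fun h' => hmax h (realizable_of_strongASPWVEq hH.symm hP' hP hs h')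
  have hI' : I ⊆ {J | J ⊆ A ∧ ((ELP.mk A E R').eReduct Φ).model J} := fun J hJ =>
    ⟨(hI hJ).1, models_eReduct_of_strongASPWVEq hH hP hP' hs hΦ hI hcomp J hJ⟩
  have hY' : ((ELP.mk A E R').eReduct Φ).model Y :=
    (minimalAgainst_of_strongASPWVEq hH.symm hP' hP hs hΦ hI' hcomp subset_rfl hYA hmax'
      ⟨hY, Or.inl rfl⟩).1
  refine ⟨hXY, hYA, hY', ?_⟩
  by_cases hXY' : X = Y
  · subst hXY'
    exact Program.model_iff_redModel_self.1 hY'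
  by_contra hX'
  exact (minimalAgainst_of_strongASPWVEq hH hP hP' hs hΦ hI hcomp hXY hYA hmax
    ⟨hY', Or.inr hX'⟩).2.elim hXY' (· hX)

lemma SEfun_subset_of_strongASPWVEq (hH : (ELP.mk A E R).strongASPWVEq (ELP.mk A E R'))
    (hP : (ELP.mk A E R).wf) (hP' : (ELP.mk A E R').wf) (hs : s ∉ A) (hE : E.Finite)
    (Φ : Set (Lit V)) : (ELP.mk A E R).SEfun Φ ⊆ (ELP.mk A E R').SEfun Φ := by
  rintro p ⟨hreal, hp⟩
  refine ⟨realizable_of_strongASPWVEq hH hP hP' hs hreal, ?_⟩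
  rw [← ELP.eReduct_inter_E hP] at hp
  rw [← ELP.eReduct_inter_E hP']
  exact SE_eReduct_subset_of_strongASPWVEq hH hP hP' hs hE Set.inter_subset_right
    (hreal.inter hP) hp

end StrongWVEquivalence

/-- For ELPs over a finite atom domain, strong ELP-CWV-, ASP-CWV-,
ELP-WV- and ASP-WV-equivalence and equality of SE-functions are all equivalent. -/
theorem stmt6 {V : Type} [Infinite V] (A : Set V) (hA : A.Finite) (E : Set (Lit V))
    (R₁ R₂ : Set (ERule V))
    (hwf₁ : (ELP.mk A E R₁).wf) (hwf₂ : (ELP.mk A E R₂).wf) :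
    List.TFAE
      [ELP.strongELPCWVEq (ELP.mk A E R₁) (ELP.mk A E R₂),
       ELP.strongASPCWVEq (ELP.mk A E R₁) (ELP.mk A E R₂),
       ELP.strongELPWVEq (ELP.mk A E R₁) (ELP.mk A E R₂),
       ELP.strongASPWVEq (ELP.mk A E R₁) (ELP.mk A E R₂),
       ∀ Φ : Set (Lit V), (ELP.mk A E R₁).SEfun Φ = (ELP.mk A E R₂).SEfun Φ] := by
  obtain ⟨s, hs⟩ := hA.infinite_compl.nonempty
  have hE : E.Finite := Lit.finite_of_atom_mem hA hwf₁.1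
  tfae_have 1 → 2 := fun h Q hQ _ => h Q hQ
  tfae_have 1 → 3 := fun h Q hQ => ELP.wvEq_of_cwvEq rfl (h Q hQ)
  tfae_have 2 → 4 := fun h Q hQ hQ' => ELP.wvEq_of_cwvEq rfl (h Q hQ hQ')
  tfae_have 3 → 4 := fun h Q hQ _ => h Q hQ
  tfae_have 4 → 5 := fun h Φ =>
    (SEfun_subset_of_strongASPWVEq h hwf₁ hwf₂ hs hE Φ).antisymm
      (SEfun_subset_of_strongASPWVEq h.symm hwf₂ hwf₁ hs hE Φ)
  tfae_have 5 → 1 := strongELPCWVEq_of_SEfun_eq hwf₁ hwf₂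
  tfae_finish
end

section
/- Let Π₁ and Π be epistemic logic programs over the same atom domain 𝒜 and epistemic-literal domain ℰ, and let Φ ⊆ ℰ be a guess. Then 𝒮ℰ_{Π₁∪Π}(Φ) = 𝒮ℰ_{Π₁}(Φ) ∩ 𝒮ℰ_Π(Φ) if Φ is realizable in the set of SE-models 𝒮ℰ_{Π₁}(Φ) ∩ 𝒮ℰ_Π(Φ), and 𝒮ℰ_{Π₁∪Π}(Φ) = ∅ otherwise. -/
variable {V : Type}

/-!
The epistemic reduct commutes with unions, so the models and the SE-models of `(Π₁ ∪ Π)^Φ` are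
the intersections of those of `Π₁^Φ` and `Π^Φ`. Since `(Y, Y)` is an SE-model whenever `Y` is a
model, the `Y`-components of `𝒮ℰ_{Π₁}(Φ) ∩ 𝒮ℰ_Π(Φ)` are exactly the common models once both
parts are realizable; and realizability in the union forces it in each part, because
compatibility survives enlarging the set of interpretations and shrinking `ℰ`.
-/

namespace Program

variable {P P₁ P₂ : Program V}

def models (P : Program V) : Set (Set V) := {I | I ⊆ P.A ∧ P.model I}

lemma model_union_s7 {I : Set V} : (P₁.union P₂).model I ↔ P₁.model I ∧ P₂.model I :=
  forall₂_or_left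

lemma redModel_union_s7 {Y X : Set V} :
    (P₁.union P₂).redModel Y X ↔ P₁.redModel Y X ∧ P₂.redModel Y X :=
  forall₂_or_left

lemma redModel_self_of_model {Y : Set V} (h : P.model Y) : P.redModel Y Y :=
  fun r hr hneg hpos => h r hr ⟨hpos, hneg⟩

lemma A_union_of_A_eq (hA : P₁.A = P₂.A) : (P₁.union P₂).A = P₁.A := by
  simp [union, hA]

lemma models_union (hA : P₁.A = P₂.A) : (P₁.union P₂).models = P₁.models ∩ P₂.models := by
  ext I
  simp only [models, Set.mem_ofPred_eq, Set.mem_inter_iff, model_union_s7, A_union_of_A_eq hA, ← hA]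
  tauto

lemma SE_union (hA : P₁.A = P₂.A) : (P₁.union P₂).SE = P₁.SE ∩ P₂.SE := by
  ext ⟨X, Y⟩
  simp only [SE, Set.mem_ofPred_eq, Set.mem_inter_iff, model_union_s7, redModel_union_s7,
    A_union_of_A_eq hA, ← hA]
  tauto

lemma mem_models_of_mem_SE {X Y : Set V} (h : (X, Y) ∈ P.SE) : Y ∈ P.models :=
  ⟨h.2.1, h.2.2.1⟩

lemma self_mem_SE {Y : Set V} (h : Y ∈ P.models) : (Y, Y) ∈ P.SE :=
  ⟨subset_rfl, h.1, h.2, redModel_self_of_model h.2⟩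

end Program

section Realizability

variable {E E' Φ : Set (Lit V)} {S T : Set (Set V)}

lemma realizableIn_mono (h : S ⊆ T) : realizableIn E Φ S → realizableIn E Φ T :=
  fun ⟨I, hIS, hI⟩ => ⟨I, hIS.trans h, hI⟩

lemma realizableIn_anti (h : E ⊆ E') : realizableIn E' Φ S → realizableIn E Φ S :=
  fun ⟨I, hIS, hne, hΦ, hE⟩ =>
    ⟨I, hIS, hne, hΦ, fun ℓ hℓ => hE ℓ ⟨h hℓ.1, hℓ.2⟩⟩

end Realizability

namespace ELP

variable {P P₁ P₂ : ELP V} {Φ : Set (Lit V)}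

lemma eReduct_union_s7 : (P₁.union P₂).eReduct Φ = (P₁.eReduct Φ).union (P₂.eReduct Φ) := by
  simp only [eReduct, union, Program.union, Program.mk.injEq, true_and]
  ext q
  simp only [Set.mem_ofPred_eq, Set.mem_union, or_and_right, exists_or]

lemma realizable_iff : P.realizable Φ ↔ realizableIn P.E Φ (P.eReduct Φ).models := Iff.rfl

lemma realizable_of_realizable_union (hA : P₁.A = P₂.A) (h : (P₁.union P₂).realizable Φ) :
    P₁.realizable Φ ∧ P₂.realizable Φ := by
  rw [realizable_iff, eReduct_union_s7, Program.models_union hA] at h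
  exact ⟨realizableIn_anti Set.subset_union_left (realizableIn_mono Set.inter_subset_left h),
    realizableIn_anti Set.subset_union_right (realizableIn_mono Set.inter_subset_right h)⟩

lemma setOf_exists_mem_SEfun_inter (hA : P₁.A = P₂.A) :
    {Y | ∃ X, (X, Y) ∈ P₁.SEfun Φ ∩ P₂.SEfun Φ} =
      {Y | P₁.realizable Φ ∧ P₂.realizable Φ ∧ Y ∈ ((P₁.union P₂).eReduct Φ).models} := by
  rw [eReduct_union_s7, Program.models_union hA]
  ext Y
  constructor
  · rintro ⟨X, ⟨h₁, hX₁⟩, h₂, hX₂⟩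
    exact ⟨h₁, h₂, Program.mem_models_of_mem_SE hX₁, Program.mem_models_of_mem_SE hX₂⟩
  · rintro ⟨h₁, h₂, hY₁, hY₂⟩
    exact ⟨Y, ⟨h₁, Program.self_mem_SE hY₁⟩, h₂, Program.self_mem_SE hY₂⟩

lemma realizable_union_iff (hA : P₁.A = P₂.A) :
    (P₁.union P₂).realizable Φ ↔
      realizableIn (P₁.union P₂).E Φ {Y | ∃ X, (X, Y) ∈ P₁.SEfun Φ ∩ P₂.SEfun Φ} := by
  rw [setOf_exists_mem_SEfun_inter hA]
  constructor
  · intro h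
    obtain ⟨h₁, h₂⟩ := realizable_of_realizable_union hA h
    simp only [h₁, h₂, true_and, Set.ofPred_mem_eq]
    exact h
  · exact realizableIn_mono fun Y hY => hY.2.2

lemma SEfun_union (hA : P₁.A = P₂.A) :
    (P₁.union P₂).SEfun Φ =
      {p | realizableIn (P₁.union P₂).E Φ {Y | ∃ X, (X, Y) ∈ P₁.SEfun Φ ∩ P₂.SEfun Φ} ∧
        p ∈ P₁.SEfun Φ ∩ P₂.SEfun Φ} := by
  rw [← realizable_union_iff hA]
  ext p
  have hSE : ((P₁.union P₂).eReduct Φ).SE = (P₁.eReduct Φ).SE ∩ (P₂.eReduct Φ).SE := by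
    rw [eReduct_union_s7]
    exact Program.SE_union hA
  simp only [SEfun, hSE, Set.mem_ofPred_eq, Set.mem_inter_iff]
  have hparts := realizable_of_realizable_union (Φ := Φ) hA
  tauto

end ELP

theorem stmt7_general {V : Type} (A : Set V) (E : Set (Lit V)) (R₁ R : Set (ERule V))
    (Φ : Set (Lit V)) :
    (realizableIn E Φ
        {Y | ∃ X, (X, Y) ∈ (ELP.mk A E R₁).SEfun Φ ∩ (ELP.mk A E R).SEfun Φ} →
      ((ELP.mk A E R₁).union (ELP.mk A E R)).SEfun Φ =
        (ELP.mk A E R₁).SEfun Φ ∩ (ELP.mk A E R).SEfun Φ) ∧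
    (¬ realizableIn E Φ
        {Y | ∃ X, (X, Y) ∈ (ELP.mk A E R₁).SEfun Φ ∩ (ELP.mk A E R).SEfun Φ} →
      ((ELP.mk A E R₁).union (ELP.mk A E R)).SEfun Φ = ∅) := by
  have hSEfun := ELP.SEfun_union (P₁ := ⟨A, E, R₁⟩) (P₂ := ⟨A, E, R⟩) (Φ := Φ) rfl
  simp only [ELP.union, Set.union_self] at hSEfun
  refine ⟨fun h => ?_, fun h => ?_⟩ <;>
    simp only [ELP.union, Set.union_self, hSEfun, h, true_and, false_and, Set.ofPred_mem_eq,
      Set.ofPred_false]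

/-- SE-function of a union: `𝒮ℰ_{P₁∪P}(Φ)` equals
`𝒮ℰ_{P₁}(Φ) ∩ 𝒮ℰ_P(Φ)` if `Φ` is realizable in this set of SE-models
(i.e. in `{Y | ∃ X, (X,Y) ∈ 𝒮ℰ_{P₁}(Φ) ∩ 𝒮ℰ_P(Φ)}`), and `∅` otherwise. -/
theorem stmt7 {V : Type} (A : Set V) (E : Set (Lit V)) (R₁ R : Set (ERule V))
    (hwf₁ : (ELP.mk A E R₁).wf) (hwf : (ELP.mk A E R).wf)
    (Φ : Set (Lit V)) (hΦ : Φ ⊆ E) :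
    (realizableIn E Φ
        {Y | ∃ X, (X, Y) ∈ (ELP.mk A E R₁).SEfun Φ ∩ (ELP.mk A E R).SEfun Φ} →
      ((ELP.mk A E R₁).union (ELP.mk A E R)).SEfun Φ =
        (ELP.mk A E R₁).SEfun Φ ∩ (ELP.mk A E R).SEfun Φ) ∧
    (¬ realizableIn E Φ
        {Y | ∃ X, (X, Y) ∈ (ELP.mk A E R₁).SEfun Φ ∩ (ELP.mk A E R).SEfun Φ} →
      ((ELP.mk A E R₁).union (ELP.mk A E R)).SEfun Φ = ∅) :=
  stmt7_general A E R₁ R Φ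
end
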